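/- arXiv:2303.08339 — 2 statements merged into one kernel-verified Lean document; each statement's English description precedes it below -/
import Mathlib

section
/- Let 0 < γ < 1, let S be a finite set with positive integer degrees d(i) for i ∈ S, let M ≥ Σ_{i∈S} d(i) with γ = (Σ_{i∈S} d(i))/M, and let Δ = max_{i∈S} d(i). With Z_j ∼ Bin(j, γ) and n_k defined via the rounding construction n_k = N(k) − N(k−1), N(k) = ⌊ Σ_{i∈S} P(Z_{d(i)} ≤ k) + 1/2 ⌋, the total degree of the model sequence satisfies | Σ_{k≥0} k·n_k − γ² M | ≤ Δ². -/
open Finset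

private lemma abel_sum (a : ℕ → ℝ) (n : ℕ) :
    ∑ k ∈ range (n + 1), (k : ℝ) * (a k - if k = 0 then 0 else a (k - 1)) =
      n * a n - ∑ k ∈ range n, a k := by
  induction n with
  | zero => simp
  | succ n ih =>
    rw [sum_range_succ, ih, sum_range_succ]
    simp only [Nat.succ_ne_zero, if_false, Nat.add_sub_cancel]
    push_cast
    ring

private lemma binom_mean (γ : ℝ) (n : ℕ) :
    ∑ k ∈ range (n + 1), (k : ℝ) * ((n.choose k : ℝ) * γ ^ k * (1 - γ) ^ (n - k)) =
      n * γ := by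
  have h := congrArg (Polynomial.eval γ) (bernsteinPolynomial.sum_smul ℝ n)
  simp only [Polynomial.eval_finset_sum, bernsteinPolynomial, nsmul_eq_mul,
    Polynomial.eval_mul, Polynomial.eval_pow, Polynomial.eval_natCast,
    Polynomial.eval_sub, Polynomial.eval_one, Polynomial.eval_X,
    mul_comm, mul_assoc, mul_left_comm] at h
  rw [mul_comm (n:ℝ) γ, ← h]
  exact Finset.sum_congr rfl fun k _ => by ring


/-- Total degree of the model sequence: `|Σ_k k·n_k − γ²M| ≤ Δ²`, where
`n_k = N(k) − N(k−1)` with `N(k) = ⌊Σ_{i∈S} P(Bin(d(i),γ) ≤ k) + 1/2⌋`, `N(−1)=0`,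
`γ = (Σ_{i∈S} d(i))/M` and `Δ` bounds the degrees. -/
theorem stmt4 {ι : Type*} (γ : ℝ) (hγ0 : 0 < γ) (hγ1 : γ < 1)
    (S : Finset ι) (d : ι → ℕ) (hd : ∀ i ∈ S, 1 ≤ d i)
    (M : ℝ) (hM : (∑ i ∈ S, (d i : ℝ)) ≤ M)
    (hγ : γ = (∑ i ∈ S, (d i : ℝ)) / M)
    (Δ : ℕ) (hΔ1 : 1 ≤ Δ) (hΔ : ∀ i ∈ S, d i ≤ Δ)
    (N : ℕ → ℤ)
    (hN : ∀ k : ℕ, N k = ⌊(∑ i ∈ S, ∑ m ∈ Finset.range (k + 1),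
        ((d i).choose m : ℝ) * γ ^ m * (1 - γ) ^ (d i - m)) + 1 / 2⌋) :
    |(∑ k ∈ Finset.range (Δ + 1),
        (k : ℝ) * ((N k - if k = 0 then 0 else N (k - 1) : ℤ) : ℝ)) - γ ^ 2 * M| ≤
      (Δ : ℝ) ^ 2 := by
  set b : ι → ℕ → ℝ := fun i m => ((d i).choose m : ℝ) * γ ^ m * (1 - γ) ^ (d i - m) with hb
  set F : ℕ → ℝ := fun k => ∑ i ∈ S, ∑ m ∈ range (k + 1), b i m with hF
  -- M ≠ 0
  have hM0 : M ≠ 0 := by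
    intro h
    rw [h, div_zero] at hγ
    exact absurd hγ (ne_of_gt hγ0)
  have hγM : γ * M = ∑ i ∈ S, (d i : ℝ) := by
    rw [hγ, div_mul_cancel₀ _ hM0]
  -- closeness
  have hclose : ∀ k, |(N k : ℝ) - F k| ≤ 1 / 2 := by
    intro k
    have h1 : (N k : ℝ) ≤ F k + 1 / 2 := by rw [hN k]; exact Int.floor_le _
    have h2 : F k + 1 / 2 < (N k : ℝ) + 1 := by rw [hN k]; exact Int.lt_floor_add_one _
    rw [abs_le]; constructor <;> linarith
  -- pointwise pmf
  have hpt : ∀ k ∈ range (Δ + 1),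
      (k : ℝ) * (F k - if k = 0 then 0 else F (k - 1)) = (k : ℝ) * ∑ i ∈ S, b i k := by
    intro k _
    cases k with
    | zero => simp
    | succ j =>
      simp only [Nat.succ_ne_zero, if_false, Nat.add_sub_cancel, hF]
      rw [← Finset.sum_sub_distrib]
      congr 1
      exact Finset.sum_congr rfl fun i _ => by rw [sum_range_succ]; ring
  -- expectation
  have hexp : ∑ k ∈ range (Δ + 1), (k : ℝ) * (F k - if k = 0 then 0 else F (k - 1)) =
      γ ^ 2 * M := by
    rw [Finset.sum_congr rfl hpt]
    simp only [Finset.mul_sum]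
    rw [Finset.sum_comm]
    have : ∀ i ∈ S, ∑ k ∈ range (Δ + 1), (k : ℝ) * b i k = (d i : ℝ) * γ := by
      intro i hi
      rw [← binom_mean γ (d i)]
      refine (Finset.sum_subset (Finset.range_subset_range.2 (Nat.succ_le_succ (hΔ i hi))) ?_).symm
      intro k _ hk
      simp only [mem_range, not_lt] at hk
      have hc : (d i).choose k = 0 := Nat.choose_eq_zero_of_lt (by omega)
      simp [hb, hc]
    rw [Finset.sum_congr rfl this, ← Finset.sum_mul, ← hγM]
    ring
  have hNa : ∑ k ∈ range (Δ + 1), (k : ℝ) *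
      ((N k : ℝ) - if k = 0 then 0 else (N (k - 1) : ℝ)) =
      (Δ : ℝ) * (N Δ : ℝ) - ∑ k ∈ range Δ, (N k : ℝ) := abel_sum (fun k => (N k : ℝ)) Δ
  have hFa := abel_sum F Δ
  have hcast : ∀ k ∈ range (Δ + 1),
      (k : ℝ) * ((N k - if k = 0 then 0 else N (k - 1) : ℤ) : ℝ) =
      (k : ℝ) * ((N k : ℝ) - if k = 0 then 0 else (N (k - 1) : ℝ)) := by
    intro k _
    congr 1
    push_cast [apply_ite (Int.cast : ℤ → ℝ)]
    ring
  rw [Finset.sum_congr rfl hcast, hNa, ← hexp, hFa]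
  have key : (Δ : ℝ) * (N Δ : ℝ) - (∑ k ∈ range Δ, (N k : ℝ)) -
      ((Δ : ℝ) * F Δ - ∑ k ∈ range Δ, F k) =
      (Δ : ℝ) * ((N Δ : ℝ) - F Δ) - ∑ k ∈ range Δ, ((N k : ℝ) - F k) := by
    rw [Finset.sum_sub_distrib]; ring
  rw [key]
  have h1 : |(Δ : ℝ) * ((N Δ : ℝ) - F Δ)| ≤ (Δ : ℝ) * (1 / 2) := by
    rw [abs_mul, abs_of_nonneg (Nat.cast_nonneg Δ)]
    exact mul_le_mul_of_nonneg_left (hclose Δ) (Nat.cast_nonneg Δ)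
  have h2 : |∑ k ∈ range Δ, ((N k : ℝ) - F k)| ≤ (Δ : ℝ) * (1 / 2) := by
    calc |∑ k ∈ range Δ, ((N k : ℝ) - F k)| ≤ ∑ k ∈ range Δ, |(N k : ℝ) - F k| :=
          Finset.abs_sum_le_sum_abs _ _
      _ ≤ ∑ _k ∈ range Δ, (1 / 2 : ℝ) := Finset.sum_le_sum fun k _ => hclose k
      _ = (Δ : ℝ) * (1 / 2) := by simp [mul_comm]
  have hΔR : (1 : ℝ) ≤ (Δ : ℝ) := by exact_mod_cast hΔ1
  calc |(Δ : ℝ) * ((N Δ : ℝ) - F Δ) - ∑ k ∈ range Δ, ((N k : ℝ) - F k)|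
      ≤ |(Δ : ℝ) * ((N Δ : ℝ) - F Δ)| + |∑ k ∈ range Δ, ((N k : ℝ) - F k)| := abs_sub _ _
    _ ≤ (Δ : ℝ) * (1 / 2) + (Δ : ℝ) * (1 / 2) := add_le_add h1 h2
    _ = (Δ : ℝ) := by ring
    _ ≤ (Δ : ℝ) ^ 2 := by nlinarith
end

section
/- Let (p_i)_{i=0}^{d} be positive reals summing to 1, let 0 < γ < 1, and suppose there is a real C ≥ 0 with C ≤ 1/(2d) such that for all 0 ≤ i < d, p_{i+1}/p_i = ((d−i)/(i+1)) · (γ/(1−γ)) · (1 + θ_i) where |θ_i| ≤ C. Then for all 0 ≤ i ≤ d, p_i = C(d,i) γ^i (1−γ)^{d−i} · (1 + ε_i) with |ε_i| ≤ 8 d C. -/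
private lemma aux_pow6 {x : ℝ} (hx : 0 ≤ x) :
    ∀ n : ℕ, (n : ℝ) * x ≤ 1/2 → (1+x)^n ≤ 1 + 2*n*x := by
  intro n
  induction n with
  | zero => simp
  | succ k ih =>
    intro h
    push_cast at h
    have hk : (k:ℝ) * x ≤ 1/2 := by nlinarith
    have h1 := ih hk
    have h2 : (1+x)^(k+1) = (1+x)^k * (1+x) := pow_succ _ _
    push_cast
    nlinarith [pow_nonneg (by linarith : (0:ℝ) ≤ 1+x) k]

/-- A probability distribution on `{0,…,d}` whose successive ratios match binomial
ratios up to multiplicative error `C ≤ 1/(2d)` is pointwise within relative error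
`8dC` of the `Bin(d,γ)` distribution. -/
theorem stmt6 (d : ℕ) (hd : 1 ≤ d) (γ : ℝ) (hγ0 : 0 < γ) (hγ1 : γ < 1)
    (p : ℕ → ℝ) (hp : ∀ i ≤ d, 0 < p i)
    (hsum : ∑ i ∈ Finset.range (d + 1), p i = 1)
    (C : ℝ) (hC0 : 0 ≤ C) (hC : C ≤ 1 / (2 * d))
    (θ : ℕ → ℝ) (hθ : ∀ i < d, |θ i| ≤ C)
    (hratio : ∀ i < d, p (i + 1) / p i =
      (((d : ℝ) - i) / ((i : ℝ) + 1)) * (γ / (1 - γ)) * (1 + θ i)) :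
    ∀ i ≤ d, ∃ ε : ℝ, |ε| ≤ 8 * d * C ∧
      p i = (d.choose i : ℝ) * γ ^ i * (1 - γ) ^ (d - i) * (1 + ε) := by
  have h1γ : (0:ℝ) < 1 - γ := by linarith
  set b : ℕ → ℝ := fun i => (d.choose i : ℝ) * γ ^ i * (1 - γ) ^ (d - i) with hbdef
  have hbpos : ∀ i ≤ d, 0 < b i := by
    intro i hi
    have h1 : 0 < (d.choose i : ℝ) := by exact_mod_cast Nat.choose_pos hi
    simp only [hbdef]
    positivity
  have hd1 : (1:ℝ) ≤ (d:ℝ) := by exact_mod_cast hd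
  set t := (d:ℝ) * C with htdef
  have ht0 : 0 ≤ t := mul_nonneg (by linarith) hC0
  have ht2 : t ≤ 1/2 := by
    have h2d : (0:ℝ) < 2*(d:ℝ) := by linarith
    rw [le_div_iff₀ h2d] at hC
    nlinarith
  have hCle : C ≤ 1/2 := by nlinarith
  set P : ℕ → ℝ := fun i => ∏ j ∈ Finset.range i, (1 + θ j) with hPdef
  have hfac : ∀ j < d, 1 - C ≤ 1 + θ j ∧ 1 + θ j ≤ 1 + C := by
    intro j hj
    have := abs_le.mp (hθ j hj)
    constructor <;> linarith [this.1, this.2]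
  have hPlow : ∀ i ≤ d, 1 - t ≤ P i := by
    intro i hi
    have h1 : (1 - C)^i ≤ P i := by
      have := Finset.prod_le_prod (s := Finset.range i)
        (f := fun _ => 1 - C) (g := fun j => 1 + θ j)
        (fun j _ => by show (0:ℝ) ≤ 1 - C; linarith)
        (fun j hj => (hfac j (lt_of_lt_of_le (Finset.mem_range.mp hj) hi)).1)
      simpa using this
    have h2 : 1 - (i:ℝ)*C ≤ (1-C)^i := by
      have := one_add_mul_le_pow (a := -C) (by linarith : (-2:ℝ) ≤ -C) i
      have heq : 1 + (i:ℝ) * (-C) = 1 - (i:ℝ)*C := by ring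
      have heq2 : (1 + -C) = 1 - C := by ring
      rw [heq, heq2] at this
      exact this
    have hid : (i:ℝ) ≤ (d:ℝ) := by exact_mod_cast hi
    have h3 : 1 - t ≤ 1 - (i:ℝ)*C := by
      simp only [htdef]
      nlinarith
    linarith
  have hPhigh : ∀ i ≤ d, P i ≤ 1 + 2*t := by
    intro i hi
    have h1 : P i ≤ (1+C)^i := by
      have := Finset.prod_le_prod (s := Finset.range i)
        (f := fun j => 1 + θ j) (g := fun _ => 1 + C)
        (fun j hj => by
          have := (hfac j (lt_of_lt_of_le (Finset.mem_range.mp hj) hi)).1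
          show (0:ℝ) ≤ 1 + θ j
          linarith)
        (fun j hj => (hfac j (lt_of_lt_of_le (Finset.mem_range.mp hj) hi)).2)
      simpa using this
    have h2 : (1+C)^i ≤ (1+C)^d := by
      apply pow_le_pow_right₀ (by linarith) hi
    have h3 : (1+C)^d ≤ 1 + 2*(d:ℝ)*C := aux_pow6 hC0 d (by rw [htdef] at ht2; linarith)
    have : 1 + 2*(d:ℝ)*C = 1 + 2*t := by rw [htdef]; ring
    linarith
  -- binomial ratio for b
  have hbr : ∀ i < d, b (i+1) = b i * ((((d:ℝ) - i)/((i:ℝ)+1)) * (γ/(1-γ))) := by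
    intro i hi
    have hch : ((d.choose (i+1) : ℝ)) * ((i:ℝ)+1) = (d.choose i : ℝ) * ((d:ℝ) - (i:ℝ)) := by
      have h' := Nat.choose_succ_right_eq d i
      have h'' : ((d.choose (i+1) * (i+1) : ℕ) : ℝ) = ((d.choose i * (d - i) : ℕ) : ℝ) := by
        exact_mod_cast congrArg (Nat.cast (R := ℝ)) h'
      push_cast [Nat.cast_sub hi.le] at h''
      linarith
    have hsub : d - i = (d - (i+1)) + 1 := by omega
    have hne : (((i:ℝ)+1) * (1-γ)) ≠ 0 := by positivity
    have key : b (i+1) * (((i:ℝ)+1) * (1-γ)) = b i * (((d:ℝ) - (i:ℝ)) * γ) := by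
      simp only [hbdef]
      rw [hsub, pow_succ γ i, pow_succ (1-γ) (d - (i+1))]
      linear_combination (γ^i * γ * (1-γ)^(d-(i+1)) * (1-γ)) * hch
    calc b (i+1) = (b i * (((d:ℝ) - (i:ℝ)) * γ)) / (((i:ℝ)+1) * (1-γ)) := by
          rw [eq_div_iff hne]; linarith
      _ = b i * ((((d:ℝ) - i)/((i:ℝ)+1)) * (γ/(1-γ))) := by
          field_simp
  -- p i in terms of b i and product
  have hq : ∀ i, i ≤ d → p i = p 0 / b 0 * b i * P i := by
    intro i
    induction i with
    | zero =>
      intro _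
      have hb0 := (hbpos 0 (Nat.zero_le d)).ne'
      simp only [hPdef, Finset.range_zero, Finset.prod_empty, mul_one]
      field_simp
    | succ k ih =>
      intro hk
      have hkd : k < d := hk
      have hk' : k ≤ d := le_of_lt hkd
      have h1 := ih hk'
      have h2 := (div_eq_iff (hp k hk').ne').mp (hratio k hkd)
      have h3 := hbr k hkd
      have hP : P (k+1) = P k * (1 + θ k) := by
        simp [hPdef, Finset.prod_range_succ]
      rw [h2, h1, h3, hP]; ring
  -- sum of b is 1
  have hbsum : ∑ i ∈ Finset.range (d+1), b i = 1 := by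
    calc ∑ i ∈ Finset.range (d+1), b i
        = ∑ i ∈ Finset.range (d+1), γ^i * (1-γ)^(d-i) * (d.choose i : ℝ) := by
          apply Finset.sum_congr rfl
          intro i _
          simp only [hbdef]; ring
      _ = (γ + (1-γ))^d := (add_pow γ (1-γ) d).symm
      _ = 1 := by norm_num
  set S := ∑ i ∈ Finset.range (d+1), b i * P i with hSdef
  have hpS : p 0 / b 0 * S = 1 := by
    rw [hSdef, Finset.mul_sum]
    rw [← hsum]
    apply Finset.sum_congr rfl
    intro i hi
    have hid : i ≤ d := Nat.lt_succ_iff.mp (Finset.mem_range.mp hi)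
    rw [hq i hid]; ring
  have hS1 : 1 - t ≤ S := by
    have : (1 - t) * 1 = ∑ i ∈ Finset.range (d+1), b i * (1-t) := by
      rw [← Finset.sum_mul, hbsum]; ring
    rw [hSdef]
    calc 1 - t = ∑ i ∈ Finset.range (d+1), b i * (1-t) := by rw [← Finset.sum_mul, hbsum]; ring
      _ ≤ ∑ i ∈ Finset.range (d+1), b i * P i := by
          apply Finset.sum_le_sum
          intro i hi
          have hid : i ≤ d := Nat.lt_succ_iff.mp (Finset.mem_range.mp hi)
          exact mul_le_mul_of_nonneg_left (hPlow i hid) (hbpos i hid).le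
  have hS2 : S ≤ 1 + 2*t := by
    rw [hSdef]
    calc ∑ i ∈ Finset.range (d+1), b i * P i
        ≤ ∑ i ∈ Finset.range (d+1), b i * (1+2*t) := by
          apply Finset.sum_le_sum
          intro i hi
          have hid : i ≤ d := Nat.lt_succ_iff.mp (Finset.mem_range.mp hi)
          exact mul_le_mul_of_nonneg_left (hPhigh i hid) (hbpos i hid).le
      _ = 1 + 2*t := by rw [← Finset.sum_mul, hbsum]; ring
  set r := p 0 / b 0 with hrdef
  have hr0 : 0 ≤ r := by
    apply div_nonneg (hp 0 (Nat.zero_le d)).le (hbpos 0 (Nat.zero_le d)).le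
  have hA : 1 ≤ r * (1+2*t) := by
    calc (1:ℝ) = r * S := hpS.symm
      _ ≤ r * (1+2*t) := mul_le_mul_of_nonneg_left hS2 hr0
  have hB : r * (1-t) ≤ 1 := by
    calc r * (1-t) ≤ r * S := mul_le_mul_of_nonneg_left hS1 hr0
      _ = 1 := hpS
  intro i hi
  refine ⟨r * P i - 1, ?_, ?_⟩
  · have hPl := hPlow i hi
    have hPh := hPhigh i hi
    have hup : r * P i ≤ r * (1+2*t) := mul_le_mul_of_nonneg_left hPh hr0
    have hlo : r * (1-t) ≤ r * P i := mul_le_mul_of_nonneg_left hPl hr0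
    have hint1 : (0:ℝ) ≤ r * t * (1 - 2*t) :=
      mul_nonneg (mul_nonneg hr0 ht0) (by linarith)
    have hint2 : (0:ℝ) ≤ t * (1 - r*(1-t)) := mul_nonneg ht0 (by linarith)
    have e1 : r * (1+2*t) ≤ 1 + 6*t := by linarith [hB, hint1, hint2]
    have e2 : 1 - 6*t ≤ r * (1-t) := by linarith [hA, hint1, hint2]
    have h8 : 8*(d:ℝ)*C = 8*t := by rw [htdef]; ring
    rw [abs_le]
    constructor <;> [linarith; linarith]
  · rw [hq i hi]
    simp only [hbdef]
    ring
end
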